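/- arXiv:math/0505078 — 3 statements merged into one kernel-verified Lean document; each statement's English description precedes it below -/
import Mathlib

section
/- Let g : ℤ → ℂ be periodic with period m ≥ 1 and suppose the mean value M(g) = (1/m)∑_{n=0}^{m-1} g(n) equals 0. Then the Dirichlet series L(s,g) = ∑_{n=1}^∞ g(n) n^{-s} converges for every real s > 0. -/
/-!
The partial sums of a periodic sequence whose sum over one period vanishes are themselves
periodic, hence bounded; since `(n + 1) ^ (-s)` decreases to `0` for `s > 0`, Dirichlet's test
(Abel summation) makes the series Cauchy.
-/

open Filter Finset Function

namespace Function.Periodic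

theorem sum_range_add {M : Type*} [AddCancelCommMonoid M] {f : ℕ → M} {m : ℕ}
    (hf : Periodic f m) (N : ℕ) : ∑ i ∈ range m, f (N + i) = ∑ i ∈ range m, f i := by
  induction N with
  | zero => simp
  | succ N ih =>
    have hsplit : ∑ i ∈ range m, f (N + (i + 1)) + f (N + 0) =
        ∑ i ∈ range m, f (N + i) + f (N + m) :=
      (sum_range_succ' (fun i => f (N + i)) m).symm.trans (sum_range_succ _ m)
    rw [add_zero, hf N] at hsplit
    simpa only [add_assoc, add_comm 1, ih] using add_right_cancel hsplit

theorem periodic_sum_range {M : Type*} [AddCancelCommMonoid M] {f : ℕ → M} {m : ℕ}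
    (hf : Periodic f m) (hsum : ∑ i ∈ range m, f i = 0) :
    Periodic (fun N => ∑ i ∈ range N, f i) m := fun N => by
  simp only [Finset.sum_range_add, hf.sum_range_add, hsum, add_zero]

theorem exists_norm_le {E : Type*} [SeminormedAddGroup E] {f : ℕ → E} {m : ℕ}
    (hf : Periodic f m) (hm : 0 < m) : ∃ b, ∀ n, ‖f n‖ ≤ b :=
  ⟨∑ i ∈ range m, ‖f i‖, fun n => by
    rw [← hf.map_mod_nat n]
    exact single_le_sum (fun i _ => norm_nonneg (f i)) (mem_range.mpr (Nat.mod_lt n hm))⟩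

end Function.Periodic

/-- If `g : ℤ → ℂ` is periodic with period `m ≥ 1` and has mean value zero, then the
Dirichlet series `L(s,g) = ∑_{n=1}^∞ g(n) n^{-s}` converges for every real `s > 0`. -/
theorem dirichlet_series_converges_of_mean_zero
    (m : ℕ) (hm : 0 < m) (g : ℤ → ℂ)
    (hper : ∀ n : ℤ, g (n + m) = g n)
    (hM : (1 / (m : ℂ)) * ∑ n ∈ Finset.range m, g n = 0)
    (s : ℝ) (hs : 0 < s) :
    ∃ L : ℂ, Tendsto
      (fun N : ℕ => ∑ n ∈ Finset.range N,
        g ((n : ℤ) + 1) * (((((n : ℝ) + 1) ^ (-s) : ℝ)) : ℂ))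
      atTop (nhds L) := by
  have hgper : Periodic (fun n : ℕ => g n) m := fun n => by simpa using hper n
  have hshift : Periodic (fun n : ℕ => g ((n : ℤ) + 1)) m := fun n => by
    simpa [add_right_comm] using hper (n + 1)
  have hsum : ∑ n ∈ range m, g ((n : ℤ) + 1) = 0 := by
    have hsum₀ : ∑ n ∈ range m, g n = 0 :=
      (mul_eq_zero.mp hM).resolve_left (by simp [hm.ne'])
    simpa [add_comm] using (hgper.sum_range_add 1).trans hsum₀
  obtain ⟨b, hb⟩ := (hshift.periodic_sum_range hsum).exists_norm_le hm
  have hanti : Antitone fun n : ℕ => ((n : ℝ) + 1) ^ (-s) := fun a c hac =>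
    Real.rpow_le_rpow_of_nonpos (by positivity) (by gcongr) (neg_nonpos.mpr hs.le)
  have hzero : Tendsto (fun n : ℕ => ((n : ℝ) + 1) ^ (-s)) atTop (nhds 0) :=
    (tendsto_rpow_neg_atTop hs).comp
      (tendsto_atTop_add_const_right _ 1 tendsto_natCast_atTop_atTop)
  have hcauchy := hanti.cauchySeq_series_mul_of_tendsto_zero_of_bounded hzero hb
  simp only [Complex.real_smul, mul_comm] at hcauchy
  exact cauchySeq_tendsto_of_complete hcauchy
end

section
/- Let f : ℕ+ → ℂ with Dirichlet series F(s) = ∑_{n≥1} f(n) n^{-s} having abscissa of convergence σ_f < ∞. Let q be a nonnegative integer, s real with s > σ_f + 2q − 2, and y a nonzero real. With T_f(s,y) = ∑_{k≥1} f(k) k^{-s}/(k²+y²), one has T_f(s,y) = (−1)^q y^{−2q} T_f(s−2q, y) + ∑_{j=1}^{q} (−1)^{j+1} y^{−2j} F(s−2j+2). -/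
/-!
Partial fractions give `1/(k² + y²) = y⁻² (1 - k²/(k² + y²))`, so term by term
`T_f(s, y) = y⁻² (F(s) - T_f(s - 2, y))` whenever both series converge. Unrolling this
first-order recurrence `q` times gives the formula.
-/

open Filter Topology Finset

theorem div_add_eq_inv_mul_sub {K : Type*} [Field K] {a X Y : K} (hY : Y ≠ 0)
    (hXY : X + Y ≠ 0) : a / (X + Y) = Y⁻¹ * (a - a * X / (X + Y)) := by
  field_simp
  ring

/-- Indexed from `0`: the term of index `n = k + 1` of `∑ f(n) n^{-s}`. -/
noncomputable def dirichletTerm (f : ℕ+ → ℂ) (s : ℝ) (k : ℕ) : ℂ :=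
  f ⟨k + 1, k.succ_pos⟩ * ((((k : ℝ) + 1) ^ (-s) : ℝ) : ℂ)

theorem dirichletTerm_sub_two (f : ℕ+ → ℂ) (s : ℝ) (k : ℕ) :
    dirichletTerm f (s - 2) k = dirichletTerm f s k * (((k : ℝ) + 1) ^ 2 : ℝ) := by
  have hk : (0 : ℝ) < k + 1 := by positivity
  rw [dirichletTerm, dirichletTerm, show -(s - 2) = -s + 2 by ring, Real.rpow_add hk,
    Real.rpow_two]
  push_cast
  ring

theorem dirichletTerm_div_eq {f : ℕ+ → ℂ} {y : ℝ} (hy : y ≠ 0) (s : ℝ) (k : ℕ) :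
    dirichletTerm f s k / ((((k : ℝ) + 1) ^ 2 + y ^ 2 : ℝ) : ℂ) =
      ((y : ℂ) ^ 2)⁻¹ * (dirichletTerm f s k -
        dirichletTerm f (s - 2) k / ((((k : ℝ) + 1) ^ 2 + y ^ 2 : ℝ) : ℂ)) := by
  have hD : ((((k : ℝ) + 1) ^ 2 + y ^ 2 : ℝ) : ℂ) ≠ 0 := by norm_cast; positivity
  rw [dirichletTerm_sub_two]
  push_cast at hD ⊢
  exact div_add_eq_inv_mul_sub (pow_ne_zero 2 (Complex.ofReal_ne_zero.mpr hy)) hD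

theorem eq_inv_sq_mul_sub_of_tendsto {f : ℕ+ → ℂ} {s y : ℝ} {A B C : ℂ} (hy : y ≠ 0)
    (hA : Tendsto (fun N ↦ ∑ k ∈ range N, dirichletTerm f s k) atTop (𝓝 A))
    (hB : Tendsto (fun N ↦ ∑ k ∈ range N,
      dirichletTerm f s k / ((((k : ℝ) + 1) ^ 2 + y ^ 2 : ℝ) : ℂ)) atTop (𝓝 B))
    (hC : Tendsto (fun N ↦ ∑ k ∈ range N,
      dirichletTerm f (s - 2) k / ((((k : ℝ) + 1) ^ 2 + y ^ 2 : ℝ) : ℂ)) atTop (𝓝 C)) :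
    B = ((y : ℂ) ^ 2)⁻¹ * (A - C) := by
  refine tendsto_nhds_unique hB ?_
  simp only [dirichletTerm_div_eq hy s, ← mul_sum, sum_sub_distrib]
  exact (hA.sub hC).const_mul _

theorem eq_add_sum_of_recurrence {σ : ℝ} {w : ℂ} {F T : ℝ → ℂ}
    (step : ∀ s, σ < s → T s = w * (F s - T (s - 2))) (q : ℕ) {s : ℝ}
    (hs : σ + 2 * q - 2 < s) :
    T s = (-1) ^ q * w ^ q * T (s - 2 * q)
      + ∑ j ∈ Icc 1 q, (-1) ^ (j + 1) * w ^ j * F (s - 2 * j + 2) := by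
  induction q with
  | zero => simp
  | succ q ih =>
    push_cast at hs
    rw [ih (by linarith), step (s - 2 * q) (by linarith),
      sum_Icc_succ_top (Nat.le_add_left 1 q)]
    push_cast
    rw [show s - 2 * q - 2 = s - 2 * (q + 1) by ring, show s - 2 * (q + 1) + 2 = s - 2 * q by ring]
    ring

/-- Iterated recurrence (Lemma 2 of the paper):
`T_f(s,y) = (−1)^q y^{−2q} T_f(s−2q,y) + ∑_{j=1}^q (−1)^{j+1} y^{−2j} F(s−2j+2)`
for `s > σ_f + 2q − 2` and `y ≠ 0`. -/
theorem T_iterated_recurrence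
    (f : ℕ+ → ℂ) (σf : ℝ) (F : ℝ → ℂ) (T : ℝ → ℝ → ℂ)
    (hF : ∀ s : ℝ, σf < s →
      Tendsto (fun N : ℕ => ∑ k ∈ Finset.range N,
        f ⟨k + 1, k.succ_pos⟩ * (((((k : ℝ) + 1) ^ (-s) : ℝ)) : ℂ))
        atTop (nhds (F s)))
    (hT : ∀ s y : ℝ, σf - 2 < s → y ≠ 0 →
      Tendsto (fun N : ℕ => ∑ k ∈ Finset.range N,
        f ⟨k + 1, k.succ_pos⟩ * (((((k : ℝ) + 1) ^ (-s) : ℝ)) : ℂ)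
          / (((((k : ℝ) + 1) ^ 2 + y ^ 2 : ℝ)) : ℂ))
        atTop (nhds (T s y)))
    (q : ℕ) (s y : ℝ) (hs : σf + 2 * q - 2 < s) (hy : y ≠ 0) :
    T s y = (-1) ^ q * ((y : ℂ)) ^ (-(2 * q : ℤ)) * T (s - 2 * q) y
      + ∑ j ∈ Finset.Icc 1 q,
          (-1) ^ (j + 1) * ((y : ℂ)) ^ (-(2 * j : ℤ)) * F (s - 2 * j + 2) := by
  have step (t : ℝ) (ht : σf < t) : T t y = ((y : ℂ) ^ 2)⁻¹ * (F t - T (t - 2) y) :=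
    eq_inv_sq_mul_sub_of_tendsto hy (hF t ht) (hT t y (by linarith) hy)
      (hT (t - 2) y (by linarith) hy)
  have hpow (n : ℕ) : (y : ℂ) ^ (-(2 * n : ℤ)) = ((y : ℂ) ^ 2)⁻¹ ^ n := by
    rw [zpow_neg, zpow_mul, zpow_natCast, zpow_ofNat, inv_pow]
  simp only [hpow]
  exact eq_add_sum_of_recurrence (T := fun t ↦ T t y) step q hs
end

section
/- For a positive integer m, integer u with 0 < u < m, r = u/m, and any real λ > 0: (1/m) ∑_{k=0}^{m−1} cos(2πkr) coth((λ + πik)/m) = cosh((1−2r)λ)/sinh(λ). -/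
/-- The complex hyperbolic cotangent. -/
noncomputable def Complex.coth (z : ℂ) : ℂ := Complex.cosh z / Complex.sinh z

/-!
With `ζ = exp (2πi/m)` and `c = exp (2λ/m)`, the `k`-th summand is
`½ (ζ^(ku) + ζ^(-ku)) · (cζ^k + 1)/(cζ^k - 1)`. Since `(cζ^k)^m = c^m`, expanding
`1/(z - 1) = (1 + z + ⋯ + z^(m-1))/(z^m - 1)` and using the orthogonality of the `m`-th roots of
unity collapses the sum to `m (c^(m-u) + c^u)/(c^m - 1)`, which is `m cosh((1 - 2r)λ)/sinh λ`.
-/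

open Finset

theorem mul_pow_pow_of_pow_eq_one {M : Type*} [CommMonoid M] {ζ : M} {m : ℕ} (hζ : ζ ^ m = 1)
    (c : M) (k : ℕ) : (c * ζ ^ k) ^ m = c ^ m := by
  rw [mul_pow, ← pow_mul, mul_comm k m, pow_mul, hζ, one_pow, mul_one]

theorem mul_pow_sub_one_ne_zero_of_pow_eq_one {R : Type*} [CommRing R] {ζ c : R} {m : ℕ}
    (hζ : ζ ^ m = 1) (hc : c ^ m ≠ 1) (k : ℕ) : c * ζ ^ k - 1 ≠ 0 := fun h ↦
  hc (by rw [← mul_pow_pow_of_pow_eq_one hζ c k, sub_eq_zero.mp h, one_pow])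

namespace IsPrimitiveRoot

variable {K : Type*} [Field K] {ζ c : K} {m : ℕ}

theorem sum_pow_mul_eq_ite (hζ : IsPrimitiveRoot ζ m) (j : ℕ) :
    ∑ k ∈ range m, ζ ^ (k * j) = if m ∣ j then (m : K) else 0 := by
  simp_rw [mul_comm _ j, pow_mul]
  split_ifs with hj
  · simp [(hζ.pow_eq_one_iff_dvd j).mpr hj]
  · rw [geom_sum_eq (mt (hζ.pow_eq_one_iff_dvd j).mp hj), ← pow_mul, mul_comm, pow_mul,
      hζ.pow_eq_one, one_pow, sub_self, zero_div]

theorem sum_pow_mul_div_mul_pow_sub_one (hζ : IsPrimitiveRoot ζ m) (hc : c ^ m ≠ 1)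
    {a : ℕ} (ha : 0 < a) (ham : a ≤ m) :
    ∑ k ∈ range m, ζ ^ (k * a) / (c * ζ ^ k - 1) = m * c ^ (m - a) / (c ^ m - 1) := by
  have hexpand (k : ℕ) : ζ ^ (k * a) / (c * ζ ^ k - 1)
      = (∑ n ∈ range m, c ^ n * ζ ^ (k * (a + n))) / (c ^ m - 1) := by
    rw [div_eq_div_iff (mul_pow_sub_one_ne_zero_of_pow_eq_one hζ.pow_eq_one hc k)
      (sub_ne_zero.mpr hc), ← mul_pow_pow_of_pow_eq_one hζ.pow_eq_one c k, ← geom_sum_mul,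
      ← mul_assoc, mul_sum]
    congr 1
    refine sum_congr rfl fun n _ ↦ ?_
    ring
  have hdvd (n : ℕ) (hn : n ∈ range m) : m ∣ a + n ↔ m - a = n := by
    rw [mem_range] at hn
    constructor
    · rintro ⟨t, ht⟩
      obtain rfl : t = 1 := by nlinarith
      omega
    · rintro rfl
      rw [Nat.add_sub_cancel' ham]
  rw [sum_congr rfl fun k _ ↦ hexpand k, ← sum_div, sum_comm]
  simp_rw [← mul_sum, hζ.sum_pow_mul_eq_ite]
  rw [sum_congr rfl fun n hn ↦ by rw [if_congr (hdvd n hn) rfl rfl, mul_ite, mul_zero],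
    sum_ite_eq, if_pos (mem_range.mpr (by omega)), mul_comm]

theorem sum_pow_mul_mul_pow_add_one_div (hζ : IsPrimitiveRoot ζ m) (hc : c ^ m ≠ 1)
    {a : ℕ} (ha : 0 < a) (ham : a < m) :
    ∑ k ∈ range m, ζ ^ (k * a) * ((c * ζ ^ k + 1) / (c * ζ ^ k - 1))
      = 2 * m * c ^ (m - a) / (c ^ m - 1) := by
  have hsplit (k : ℕ) : ζ ^ (k * a) * ((c * ζ ^ k + 1) / (c * ζ ^ k - 1))
      = ζ ^ (k * a) + 2 * (ζ ^ (k * a) / (c * ζ ^ k - 1)) := by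
    have hz := mul_pow_sub_one_ne_zero_of_pow_eq_one hζ.pow_eq_one hc k
    field_simp
    ring
  have hnd : ¬ m ∣ a := Nat.not_dvd_of_pos_of_lt ha ham
  rw [sum_congr rfl fun k _ ↦ hsplit k, sum_add_distrib, ← mul_sum, hζ.sum_pow_mul_eq_ite,
    if_neg hnd, hζ.sum_pow_mul_div_mul_pow_sub_one hc ha ham.le]
  ring

end IsPrimitiveRoot

namespace Complex

theorem coth_eq_exp_two_mul (w : ℂ) : coth w = (exp (2 * w) + 1) / (exp (2 * w) - 1) := by
  have h2 : (2 : ℂ) * exp w ≠ 0 := mul_ne_zero two_ne_zero (exp_ne_zero w)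
  rw [coth, ← mul_div_mul_left _ _ h2, cosh, sinh, two_mul w, exp_add, exp_neg]
  field_simp

theorem cosh_sub_two_mul_div_sinh (w t : ℂ) :
    cosh (w - 2 * t) / sinh w = (exp (2 * (w - t)) + exp (2 * t)) / (exp (2 * w) - 1) := by
  have h2 : (2 : ℂ) * exp w ≠ 0 := mul_ne_zero two_ne_zero (exp_ne_zero w)
  rw [← mul_div_mul_left _ _ h2, cosh, sinh]
  simp only [exp_neg, exp_sub, mul_sub, two_mul, exp_add]
  field_simp

theorem cosh_mul_div_sinh_eq_pow {m u : ℕ} (hm : m ≠ 0) (hu : u ≤ m) (w : ℂ) :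
    cosh ((1 - 2 * (u / m)) * w) / sinh w
      = (exp (2 * w / m) ^ (m - u) + exp (2 * w / m) ^ u) / (exp (2 * w / m) ^ m - 1) := by
  have hpow (n : ℕ) : exp (2 * w / m) ^ n = exp (2 * (w * n / m)) := by
    rw [← exp_nat_mul]
    ring_nf
  have hm' : (m : ℂ) ≠ 0 := Nat.cast_ne_zero.mpr hm
  rw [hpow, hpow, hpow, Nat.cast_sub hu, mul_div_cancel_right₀ _ hm',
    show w * (m - u) / m = w - w * u / m by field_simp, ← cosh_sub_two_mul_div_sinh]
  ring_nf

theorem ofReal_cos_two_pi_mul_eq_pow_add_pow {m u : ℕ} (hm : m ≠ 0) (hu : u ≤ m) (k : ℕ) :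
    ((Real.cos (2 * Real.pi * k * ((u : ℝ) / m)) : ℝ) : ℂ)
      = (exp (2 * Real.pi * I / m) ^ (k * u) + exp (2 * Real.pi * I / m) ^ (k * (m - u))) / 2 := by
  have hx : exp (2 * Real.pi * I / m) ^ (k * u)
      = exp ((2 * Real.pi * k * ((u : ℝ) / m) : ℝ) * I) := by
    rw [← exp_nat_mul]
    push_cast
    field_simp
  have hinv : exp (2 * Real.pi * I / m) ^ (k * (m - u))
      = (exp (2 * Real.pi * I / m) ^ (k * u))⁻¹ := by
    refine eq_inv_of_mul_eq_one_left ?_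
    rw [← pow_add, ← mul_add, Nat.sub_add_cancel hu, mul_comm k m, pow_mul,
      (isPrimitiveRoot_exp m hm).pow_eq_one, one_pow]
  rw [ofReal_cos, cos, hinv, hx, ← exp_neg, neg_mul]

end Complex

open Complex in
theorem cos_coth_sum_general
    (m : ℕ) (u : ℕ) (hu : 0 < u) (hum : u < m)
    (lam : ℝ) (hlam : 0 < lam) :
    (1 / (m : ℂ)) * ∑ k ∈ Finset.range m,
      ((Real.cos (2 * Real.pi * k * ((u : ℝ) / m)) : ℝ) : ℂ)
        * Complex.coth (((lam : ℂ) + Real.pi * (k : ℂ) * Complex.I) / (m : ℂ))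
    = (((Real.cosh ((1 - 2 * ((u : ℝ) / m)) * lam) / Real.sinh lam : ℝ)) : ℂ) := by
  have hm : m ≠ 0 := by omega
  set ζ : ℂ := exp (2 * Real.pi * I / m)
  set c : ℂ := exp (2 * lam / m)
  have hζ : IsPrimitiveRoot ζ m := isPrimitiveRoot_exp m hm
  have hc : c ^ m ≠ 1 := by
    rw [← exp_nat_mul, mul_div_cancel₀ _ (Nat.cast_ne_zero.mpr hm), ← ofReal_ofNat,
      ← ofReal_mul, ← ofReal_exp, ofReal_ne_one, ne_eq, Real.exp_eq_one_iff]
    positivity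
  have hcoth (k : ℕ) :
      coth ((lam + Real.pi * k * I) / m) = (c * ζ ^ k + 1) / (c * ζ ^ k - 1) := by
    rw [coth_eq_exp_two_mul, ← exp_nat_mul, ← exp_add]
    ring_nf
  calc
    _ = (1 / (m : ℂ))
        * ((∑ k ∈ range m, ζ ^ (k * u) * ((c * ζ ^ k + 1) / (c * ζ ^ k - 1))
        + ∑ k ∈ range m, ζ ^ (k * (m - u)) * ((c * ζ ^ k + 1) / (c * ζ ^ k - 1))) / 2) := by
      rw [← sum_add_distrib, sum_div]
      congr 1
      refine sum_congr rfl fun k _ ↦ ?_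
      rw [ofReal_cos_two_pi_mul_eq_pow_add_pow hm hum.le, hcoth]
      ring
    _ = (c ^ (m - u) + c ^ u) / (c ^ m - 1) := by
      rw [hζ.sum_pow_mul_mul_pow_add_one_div hc hu hum,
        hζ.sum_pow_mul_mul_pow_add_one_div hc (by omega) (by omega), Nat.sub_sub_self hum.le]
      field_simp
    _ = _ := by
      push_cast
      exact (cosh_mul_div_sinh_eq_pow hm hum.le _).symm

/-- The finite identity used in the proof of Corollary 4: for `0 < u < m`, `r = u/m`
and `λ > 0`, `(1/m) ∑_{k=0}^{m−1} cos(2πkr) coth((λ+πik)/m) = cosh((1−2r)λ)/sinh(λ)`. -/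
theorem cos_coth_sum
    (m : ℕ) (hm : 0 < m) (u : ℕ) (hu : 0 < u) (hum : u < m)
    (lam : ℝ) (hlam : 0 < lam) :
    (1 / (m : ℂ)) * ∑ k ∈ Finset.range m,
      ((Real.cos (2 * Real.pi * k * ((u : ℝ) / m)) : ℝ) : ℂ)
        * Complex.coth (((lam : ℂ) + Real.pi * (k : ℂ) * Complex.I) / (m : ℂ))
    = (((Real.cosh ((1 - 2 * ((u : ℝ) / m)) * lam) / Real.sinh lam : ℝ)) : ℂ) :=
  cos_coth_sum_general m u hu hum lam hlam
end
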